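/- Dominance under the sufficient condition implies dominance in the general sense: if L1 has cost and all resource accumulations no greater than L2 at the same vertex, and resource extension functions are monotone non-decreasing in the resource argument while feasibility bounds are upper bounds, then every feasible extension of L2 is also a feasible extension of L1 and yields cost no greater. -/

import Mathlib

/-- Update the resource state along a single edge. -/
def stepState {E R : Type*} (f : E → R → ℝ → ℝ) (e : E) (s : R → ℝ) : R → ℝ :=
  fun i => f e i (s i)

/-- Extend a resource state along a sequence of edges. -/
def extendState {E R : Type*} (f : E → R → ℝ → ℝ) : List E → (R → ℝ) → (R → ℝ)
  | [], s => s
  | e :: ε, s => extendState f ε (stepState f e s)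

/-- Feasibility: after each edge the resource values satisfy the upper bounds. -/
def feasAlong {E R : Type*} (f : E → R → ℝ → ℝ) (b : R → ℝ) :
    List E → (R → ℝ) → Prop
  | [], _ => True
  | e :: ε, s => (∀ i, stepState f e s i ≤ b i) ∧ feasAlong f b ε (stepState f e s)

section Dominance

variable {E R : Type*} {f : E → R → ℝ → ℝ}

theorem stepState_monotone (hf : ∀ e i, Monotone (f e i)) (e : E) :
    Monotone (stepState f e) :=
  fun _ _ hst i => hf e i (hst i)

theorem feasAlong_antitone (hf : ∀ e i, Monotone (f e i)) (b : R → ℝ) :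
    ∀ ε : List E, Antitone (feasAlong f b ε)
  | [], _, _, _, _ => trivial
  | e :: ε, _, _, hst, ⟨hbound, hrest⟩ =>
    have hstep := stepState_monotone hf e hst
    ⟨fun i => (hstep i).trans (hbound i), feasAlong_antitone hf b ε hstep hrest⟩

end Dominance

theorem sufficient_dominance_implies_general {E R : Type*}
    (f : E → R → ℝ → ℝ) (c : E → ℝ) (b : R → ℝ)
    (hmono : ∀ e i, Monotone (f e i))
    (cost1 cost2 : ℝ) (s1 s2 : R → ℝ)
    (hcost : cost1 ≤ cost2) (hstate : ∀ i, s1 i ≤ s2 i) :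
    ∀ ε : List E, feasAlong f b ε s2 →
      feasAlong f b ε s1 ∧
        cost1 + (ε.map c).sum ≤ cost2 + (ε.map c).sum :=
  fun ε hfeas => ⟨feasAlong_antitone hmono b ε hstate hfeas, add_le_add_left hcost _⟩
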